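/- arXiv:1108.6133 — 2 statements merged into one kernel-verified Lean document; each statement's English description precedes it below -/
import Mathlib

section
/- For every real number ρ ≥ 2, one has κ^c_ρ(1) = √(4+ρ²)/(1+ρ). -/
open MeasureTheory Filter

/-- `rIdx ρ k i` is r_i for i ∈ {2, …, k+1}: r_i = 2 for 2 ≤ i ≤ k and r_{k+1} = 1+ρ. -/
noncomputable def rIdx (ρ : ℝ) (k i : ℕ) : ℝ := if i = k + 1 then 1 + ρ else 2

/-- `dSeq ρ k a j` is d_{j+1}: d_1 = 1+ρ and
d_{j+2} = √(d_{j+1}² + 2 r_{j+2} a_{j+2} d_{j+1} + r_{j+2}²), where `a ⟨j, _⟩` encodes a_{j+2}. -/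
noncomputable def dSeq (ρ : ℝ) (k : ℕ) (a : Fin k → ℝ) : ℕ → ℝ
  | 0 => 1 + ρ
  | j + 1 =>
      Real.sqrt (dSeq ρ k a j ^ 2
        + 2 * rIdx ρ k (j + 2) * (if h : j < k then a ⟨j, h⟩ else 0) * dSeq ρ k a j
        + rIdx ρ k (j + 2) ^ 2)

/-- D(a_2,…,a_{k+1}) = d_{k+1}. -/
noncomputable def Dfun (ρ : ℝ) (k : ℕ) (a : Fin k → ℝ) : ℝ := dSeq ρ k a k

/-- κ^c_ρ(k): the infimum over (a_2,…,a_{k+1}) ∈ [0,1)^k of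
max( (4ρ/((1+ρ)² ∏ √(1−a_i²)))^{1/(k+1)} , 2ρ/D(a_2,…,a_{k+1}) ). -/
noncomputable def kappaCk (ρ : ℝ) (k : ℕ) : ℝ :=
  sInf ((fun a : Fin k → ℝ =>
      max ((4 * ρ / ((1 + ρ) ^ 2 * ∏ i, Real.sqrt (1 - a i ^ 2))) ^ ((1 : ℝ) / ((k : ℝ) + 1)))
        (2 * ρ / Dfun ρ k a)) '' {a | ∀ i, 0 ≤ a i ∧ a i < 1})

/-- κ^c_ρ = inf_{k ≥ 1} κ^c_ρ(k). -/
noncomputable def kappaC (ρ : ℝ) : ℝ := sInf {x | ∃ k : ℕ, 1 ≤ k ∧ x = kappaCk ρ k}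

/-!
For `k = 1`, after multiplying by `1 + ρ` and squaring, the objective at `a₂ = s` becomes
`max (4ρ / √(1 - s²)) ((2ρ)² / (2 + 2s))`. The first term increases and the second decreases
with `s`, and both equal `4 + ρ²` at `s = (ρ² - 4) / (ρ² + 4)`, a point of `[0, 1)` because
`ρ ≥ 2`. So the infimum is a minimum, with value `√(4 + ρ²) / (1 + ρ)`.
-/

open Real Set

noncomputable def kappaOneSqObjective (ρ s : ℝ) : ℝ :=
  max (4 * ρ / √(1 - s ^ 2)) ((2 * ρ) ^ 2 / (2 + 2 * s))

section

variable {ρ : ℝ}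

lemma Dfun_one (hρ : -1 ≤ ρ) (a : Fin 1 → ℝ) : Dfun ρ 1 a = (1 + ρ) * √(2 + 2 * a 0) := by
  have h : (1 + ρ) ^ 2 + 2 * (1 + ρ) * a 0 * (1 + ρ) + (1 + ρ) ^ 2
      = (1 + ρ) ^ 2 * (2 + 2 * a 0) := by ring
  simp only [Dfun, dSeq, rIdx, if_true, zero_lt_one, dite_true, Fin.zero_eta]
  rw [h, sqrt_mul (sq_nonneg _), sqrt_sq (by linarith)]

lemma kappaCk_one_objective_eq (hρ : 0 ≤ ρ) (a : Fin 1 → ℝ) :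
    max ((4 * ρ / ((1 + ρ) ^ 2 * ∏ i, √(1 - a i ^ 2))) ^ ((1 : ℝ) / (((1 : ℕ) : ℝ) + 1)))
        (2 * ρ / Dfun ρ 1 a)
      = √(kappaOneSqObjective ρ (a 0)) / (1 + ρ) := by
  have h1ρ : 0 ≤ 1 + ρ := by linarith
  have hleft : (4 * ρ / ((1 + ρ) ^ 2 * √(1 - a 0 ^ 2))) ^ ((1 : ℝ) / (((1 : ℕ) : ℝ) + 1))
      = √(4 * ρ / √(1 - a 0 ^ 2)) / (1 + ρ) := by
    rw [Nat.cast_one, one_add_one_eq_two, ← sqrt_eq_rpow, mul_comm ((1 + ρ) ^ 2), ← div_div,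
      sqrt_div (div_nonneg (by positivity) (sqrt_nonneg _)), sqrt_sq h1ρ]
  have hright : 2 * ρ / Dfun ρ 1 a = √((2 * ρ) ^ 2 / (2 + 2 * a 0)) / (1 + ρ) := by
    rw [Dfun_one (by linarith), sqrt_div (sq_nonneg _), sqrt_sq (by positivity), div_div,
      mul_comm (1 + ρ)]
  rw [Fin.prod_univ_one, hleft, hright, max_div_div_right h1ρ, kappaOneSqObjective,
    sqrt_monotone.map_max]

lemma kappaCk_one_eq_sInf (hρ : 0 ≤ ρ) :
    kappaCk ρ 1 = sInf ((fun x => √x / (1 + ρ)) '' (kappaOneSqObjective ρ '' Ico 0 1)) := by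
  rw [kappaCk, image_image]
  congr 1
  ext x
  constructor
  · rintro ⟨a, ha, rfl⟩
    exact ⟨a 0, ha 0, (kappaCk_one_objective_eq hρ a).symm⟩
  · rintro ⟨s, hs, rfl⟩
    exact ⟨fun _ => s, fun _ => hs, kappaCk_one_objective_eq hρ _⟩

lemma kappaOneSqObjective_balance (hρ : 0 < ρ) :
    kappaOneSqObjective ρ ((ρ ^ 2 - 4) / (ρ ^ 2 + 4)) = 4 + ρ ^ 2 := by
  have hden : 0 < ρ ^ 2 + 4 := by positivity
  have hsqrt : √(1 - ((ρ ^ 2 - 4) / (ρ ^ 2 + 4)) ^ 2) = 4 * ρ / (ρ ^ 2 + 4) := by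
    rw [sqrt_eq_iff_mul_self_eq_of_pos (by positivity)]
    field_simp
    ring
  have hleft : 4 * ρ / (4 * ρ / (ρ ^ 2 + 4)) = 4 + ρ ^ 2 := by
    field_simp
    ring
  have hright : (2 * ρ) ^ 2 / (2 + 2 * ((ρ ^ 2 - 4) / (ρ ^ 2 + 4))) = 4 + ρ ^ 2 := by
    field_simp
    ring
  rw [kappaOneSqObjective, hsqrt, hleft, hright, max_self]

lemma sq_mul_one_sub_sq_le (hρ : 2 ≤ ρ) {s : ℝ} (hs : (2 * ρ) ^ 2 ≤ (4 + ρ ^ 2) * (2 + 2 * s)) :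
    (4 + ρ ^ 2) ^ 2 * (1 - s ^ 2) ≤ (4 * ρ) ^ 2 := by
  -- with `w = (4 + ρ²)(1 + s)`: `(4ρ)² - (4 + ρ²)²(1 - s²) = (w - 2ρ²)(w - 8)`
  have hw : 2 * ρ ^ 2 ≤ (4 + ρ ^ 2) * (1 + s) := by linarith
  nlinarith [mul_nonneg (sub_nonneg.2 hw) (by nlinarith : (0 : ℝ) ≤ (4 + ρ ^ 2) * (1 + s) - 8)]

lemma le_kappaOneSqObjective (hρ : 2 ≤ ρ) {s : ℝ} (hs₀ : -1 < s) (hs₁ : s < 1) :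
    4 + ρ ^ 2 ≤ kappaOneSqObjective ρ s := by
  rcases le_total ((4 + ρ ^ 2) * (2 + 2 * s)) ((2 * ρ) ^ 2) with hs | hs
  · exact le_max_of_le_right ((le_div_iff₀ (by linarith)).2 hs)
  · refine le_max_of_le_left ((le_div_iff₀ (sqrt_pos.2 (by nlinarith))).2 ?_)
    calc (4 + ρ ^ 2) * √(1 - s ^ 2) = √((4 + ρ ^ 2) ^ 2 * (1 - s ^ 2)) := by
          rw [sqrt_mul (sq_nonneg _), sqrt_sq (by positivity)]
      _ ≤ √((4 * ρ) ^ 2) := sqrt_le_sqrt (sq_mul_one_sub_sq_le hρ hs)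
      _ = 4 * ρ := sqrt_sq (by linarith)

lemma isLeast_kappaOneSqObjective (hρ : 2 ≤ ρ) :
    IsLeast (kappaOneSqObjective ρ '' Ico 0 1) (4 + ρ ^ 2) := by
  have hden : 0 < ρ ^ 2 + 4 := by positivity
  refine ⟨⟨(ρ ^ 2 - 4) / (ρ ^ 2 + 4), ⟨?_, ?_⟩, kappaOneSqObjective_balance (by linarith)⟩, ?_⟩
  · exact div_nonneg (by nlinarith) hden.le
  · rw [div_lt_one hden]
    linarith
  · rintro _ ⟨s, hs, rfl⟩
    exact le_kappaOneSqObjective hρ (by linarith [hs.1]) hs.2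

end

/-- For every real number ρ ≥ 2, one has κ^c_ρ(1) = √(4+ρ²)/(1+ρ). -/
theorem kappaCk_one_eq_of_two_le (ρ : ℝ) (hρ : 2 ≤ ρ) :
    kappaCk ρ 1 = Real.sqrt (4 + ρ ^ 2) / (1 + ρ) := by
  have hmono : Monotone fun x => √x / (1 + ρ) :=
    fun _ _ hxy => div_le_div_of_nonneg_right (sqrt_le_sqrt hxy) (by linarith)
  rw [kappaCk_one_eq_sInf (by linarith)]
  exact (hmono.map_isLeast (isLeast_kappaOneSqObjective hρ)).csInf_eq
end

section
/- Fix a real ρ > 1, an integer k ≥ 1 and reals a_2,…,a_{k+1} ∈ (0,1). There exists an integer d₀ ≥ 3 such that for every integer d ≥ d₀ the following hold, writing points of ℝ^d = ℝ² × ℝ^{d−2} as x = (x′, x″). (i) For every i ∈ {2,…,k+1}: if y = (y′,y″) and z = (z′,z″) satisfy y′, z′ ∈ (0, d^{−1/2})², d_{i−1} − 3/d < ‖y″‖ ≤ d_{i−1} − 2/d, d_i − 3/d < ‖z″‖ ≤ d_i − 2/d, and ⟨z″, y″⟩ ≥ ‖z″‖·‖y″‖·( (d_{i−1} + a_i r_i)/d_i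 + d^{−1/2} ), then ‖z − y‖ < r_i. (ii) If y = (y′, 0) with y′ ∈ (−d^{−1/2}, d^{−1/2}) × (−d^{−1/2}, 0) and z = (z′, z″) with z′ ∈ (0, d^{−1/2})² and ‖z″‖ ≤ (1+ρ) − 2/d, then ‖z − y‖ < 1+ρ. -/
/-!
Put `s = d^{-1/2}`, so that `1/d = s²`, and `Y = ‖y″‖`, `Z = ‖z″‖`. The recursion
`d_i² = d_{i-1}² + 2 r_i a_i d_{i-1} + r_i²` is the law of cosines: `c = (d_{i-1} + a_i r_i) / d_i`
lies in `[0, 1]` and `d_i² + d_{i-1}² - 2 c d_i d_{i-1} = r_i²`. As `Y` and `Z` lie within `3s²`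
below `d_{i-1}` and `d_i`, the quantity `Z² + Y² - 2cZY` exceeds `r_i²` by `O(s²)`, and so do the
planar coordinates, whereas the extra `s` in the inner product hypothesis subtracts `2sZY ≥ 2s`.
In (ii) the margin `2s²` on `‖z″‖` saves about `4(1+ρ)s²`, which beats the planar `8s²` once
`s² < ρ - 1`.
-/

open MeasureTheory Filter

open Topology

section Triangle

variable {D D' r α c Y Z M e : ℝ}

lemma add_mul_le_sqrt (hD : 0 ≤ D) (hr : 0 ≤ r) (hα0 : 0 ≤ α) (hα1 : α ≤ 1) :
    D + α * r ≤ √(D ^ 2 + 2 * r * α * D + r ^ 2) := by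
  rw [Real.le_sqrt (by positivity) (by positivity)]
  nlinarith [mul_nonneg (mul_nonneg hα0 (sub_nonneg.2 hα1)) (sq_nonneg r)]

lemma sq_add_sq_sub_cos_eq (hD : 0 ≤ D) (hr : 0 ≤ r) (hα : 0 ≤ α)
    (hD' : D' = √(D ^ 2 + 2 * r * α * D + r ^ 2)) (hD'0 : 0 < D') :
    D' ^ 2 + D ^ 2 - 2 * ((D + α * r) / D') * D' * D = r ^ 2 := by
  have hsq : D' ^ 2 = D ^ 2 + 2 * r * α * D + r ^ 2 := by
    rw [hD', Real.sq_sqrt (by positivity)]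
  field_simp
  linear_combination hsq

lemma sq_add_sq_sub_mul_le (hc : 0 ≤ c) (hY0 : 0 ≤ Y) (hY : Y ≤ D) (hZ0 : 0 ≤ Z) (hZ : Z ≤ D') :
    Z ^ 2 + Y ^ 2 - 2 * c * Z * Y
      ≤ D' ^ 2 + D ^ 2 - 2 * c * D' * D + 2 * c * (D' * (D - Y) + D * (D' - Z)) := by
  have hprod : D' * D - Z * Y ≤ D' * (D - Y) + D * (D' - Z) := by
    nlinarith [mul_le_mul_of_nonneg_right hY (sub_nonneg.2 hZ)]
  nlinarith [mul_le_mul hZ hZ hZ0 (hZ0.trans hZ), mul_le_mul hY hY hY0 (hY0.trans hY),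
    mul_le_mul_of_nonneg_left hprod (by positivity : (0 : ℝ) ≤ 2 * c)]

lemma sq_add_sq_sub_cos_le_of_near (hD : 0 ≤ D) (hr : 0 ≤ r) (hα0 : 0 ≤ α) (hα1 : α ≤ 1)
    (hD' : D' = √(D ^ 2 + 2 * r * α * D + r ^ 2)) (hD'0 : 0 < D') (hDM : D ≤ M) (hD'M : D' ≤ M)
    (hY0 : 0 ≤ Y) (hYl : D - 3 * e ≤ Y) (hYu : Y ≤ D)
    (hZ0 : 0 ≤ Z) (hZl : D' - 3 * e ≤ Z) (hZu : Z ≤ D') :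
    Z ^ 2 + Y ^ 2 - 2 * ((D + α * r) / D') * Z * Y ≤ r ^ 2 + 12 * M * e := by
  set c := (D + α * r) / D'
  have hc0 : 0 ≤ c := by positivity
  have hc1 : c ≤ 1 := (div_le_one hD'0).2 (hD' ▸ add_mul_le_sqrt hD hr hα0 hα1)
  have hDY : 0 ≤ D - Y := sub_nonneg.2 hYu
  have hDZ : 0 ≤ D' - Z := sub_nonneg.2 hZu
  have hsum0 : 0 ≤ D' * (D - Y) + D * (D' - Z) :=
    add_nonneg (mul_nonneg hD'0.le hDY) (mul_nonneg hD hDZ)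
  have hsum : D' * (D - Y) + D * (D' - Z) ≤ 6 * M * e := by
    nlinarith [mul_le_mul hD'M (by linarith : D - Y ≤ 3 * e) hDY (hD'0.le.trans hD'M),
      mul_le_mul hDM (by linarith : D' - Z ≤ 3 * e) hDZ (hD'0.le.trans hD'M)]
  nlinarith [sq_add_sq_sub_mul_le hc0 hY0 hYu hZ0 hZu, sq_add_sq_sub_cos_eq hD hr hα0 hD' hD'0,
    mul_le_mul_of_nonneg_right hc1 hsum0]

end Triangle

section Sequence

variable {ρ : ℝ} {k : ℕ} {a : Fin k → ℝ}

lemma rIdx_pos (hρ : 0 < 1 + ρ) (i : ℕ) : 0 < rIdx ρ k i := by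
  unfold rIdx; split <;> linarith

lemma dSeq_succ {j : ℕ} (hj : j < k) :
    dSeq ρ k a (j + 1) = √(dSeq ρ k a j ^ 2
      + 2 * rIdx ρ k (j + 2) * a ⟨j, hj⟩ * dSeq ρ k a j + rIdx ρ k (j + 2) ^ 2) := by
  simp [dSeq, hj]

lemma dSeq_nonneg (hρ : 0 ≤ 1 + ρ) : ∀ j, 0 ≤ dSeq ρ k a j
  | 0 => hρ
  | _ + 1 => Real.sqrt_nonneg _

lemma dSeq_monotone (hρ : 0 < 1 + ρ) (ha : ∀ i, 0 ≤ a i) : Monotone (dSeq ρ k a) := by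
  refine monotone_nat_of_le_succ fun j => ?_
  have hd := dSeq_nonneg (a := a) hρ.le j
  have hr := rIdx_pos (k := k) hρ (j + 2)
  have hα : 0 ≤ if h : j < k then a ⟨j, h⟩ else 0 := by split <;> simp [ha]
  rw [dSeq, Real.le_sqrt hd (by positivity)]
  nlinarith [mul_nonneg (mul_nonneg hr.le hα) hd]

lemma one_add_le_dSeq (hρ : 0 < 1 + ρ) (ha : ∀ i, 0 ≤ a i) (j : ℕ) : 1 + ρ ≤ dSeq ρ k a j :=
  dSeq_monotone hρ ha (Nat.zero_le j)

end Sequence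

lemma planar_dist_lt_one_add {ρ s y1 y2 z1 z2 Z : ℝ} (hs : 0 < s) (hsρ : s ^ 2 < ρ - 1)
    (hy1 : y1 ∈ Set.Ioo (-s) s) (hy2 : y2 ∈ Set.Ioo (-s) 0)
    (hz1 : z1 ∈ Set.Ioo 0 s) (hz2 : z2 ∈ Set.Ioo 0 s) (hZ0 : 0 ≤ Z) (hZ : Z ≤ 1 + ρ - 2 * s ^ 2) :
    √((z1 - y1) ^ 2 + (z2 - y2) ^ 2 + Z ^ 2) < 1 + ρ := by
  obtain ⟨hy1l, hy1u⟩ := hy1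
  obtain ⟨hy2l, hy2u⟩ := hy2
  obtain ⟨hz1l, hz1u⟩ := hz1
  obtain ⟨hz2l, hz2u⟩ := hz2
  have h1 : (z1 - y1) ^ 2 < (2 * s) ^ 2 := sq_lt_sq' (by linarith) (by linarith)
  have h2 : (z2 - y2) ^ 2 < (2 * s) ^ 2 := sq_lt_sq' (by linarith) (by linarith)
  have hZsq : Z ^ 2 ≤ (1 + ρ - 2 * s ^ 2) ^ 2 := pow_le_pow_left₀ hZ0 hZ 2
  rw [Real.sqrt_lt' (by nlinarith)]
  nlinarith [mul_pos (pow_pos hs 2) (sub_pos.2 hsρ)]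

lemma planar_dist_lt_rIdx {E : Type*} [NormedAddCommGroup E] [InnerProductSpace ℝ E]
    {ρ : ℝ} (hρ : 1 < ρ) {k : ℕ} {a : Fin k → ℝ} (ha : ∀ i, 0 ≤ a i ∧ a i ≤ 1)
    {j : ℕ} (hj : j < k) {s : ℝ} (hs : 0 < s) (hsM : (6 * dSeq ρ k a k + 1) * s ≤ 1)
    {y1 y2 z1 z2 : ℝ} {y z : E}
    (hy1 : y1 ∈ Set.Ioo 0 s) (hy2 : y2 ∈ Set.Ioo 0 s)
    (hz1 : z1 ∈ Set.Ioo 0 s) (hz2 : z2 ∈ Set.Ioo 0 s)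
    (hYl : dSeq ρ k a j - 3 * s ^ 2 < ‖y‖) (hYu : ‖y‖ ≤ dSeq ρ k a j - 2 * s ^ 2)
    (hZl : dSeq ρ k a (j + 1) - 3 * s ^ 2 < ‖z‖) (hZu : ‖z‖ ≤ dSeq ρ k a (j + 1) - 2 * s ^ 2)
    (hinner : ‖z‖ * ‖y‖ * ((dSeq ρ k a j + a ⟨j, hj⟩ * rIdx ρ k (j + 2)) /
      dSeq ρ k a (j + 1) + s) ≤ inner ℝ z y) :
    √((z1 - y1) ^ 2 + (z2 - y2) ^ 2 + ‖z - y‖ ^ 2) < rIdx ρ k (j + 2) := by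
  set D := dSeq ρ k a j
  set D' := dSeq ρ k a (j + 1)
  set M := dSeq ρ k a k
  set r := rIdx ρ k (j + 2)
  set c := (D + a ⟨j, hj⟩ * r) / D'
  have hρ0 : 0 < 1 + ρ := by linarith
  have ha0 : ∀ i, 0 ≤ a i := fun i => (ha i).1
  have hD : 1 + ρ ≤ D := one_add_le_dSeq hρ0 ha0 j
  have hD' : 1 + ρ ≤ D' := one_add_le_dSeq hρ0 ha0 (j + 1)
  have hDM : D ≤ M := dSeq_monotone hρ0 ha0 hj.le
  have hr : 0 < r := rIdx_pos hρ0 (j + 2)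
  have hcos : ‖z‖ ^ 2 + ‖y‖ ^ 2 - 2 * c * ‖z‖ * ‖y‖ ≤ r ^ 2 + 12 * M * s ^ 2 :=
    sq_add_sq_sub_cos_le_of_near (by linarith) hr.le (ha0 _) (ha _).2 (dSeq_succ hj)
      (by linarith) hDM (dSeq_monotone hρ0 ha0 hj)
      (norm_nonneg y) hYl.le (by linarith [sq_nonneg s])
      (norm_nonneg z) hZl.le (by linarith [sq_nonneg s])
  have hs1 : 13 * s ≤ 1 := by
    nlinarith [mul_le_mul_of_nonneg_right (by linarith : 13 ≤ 6 * M + 1) hs.le]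
  have hZY : 1 ≤ ‖z‖ * ‖y‖ := one_le_mul_of_one_le_of_one_le (by nlinarith) (by nlinarith)
  obtain ⟨hy1l, hy1u⟩ := hy1
  obtain ⟨hy2l, hy2u⟩ := hy2
  obtain ⟨hz1l, hz1u⟩ := hz1
  obtain ⟨hz2l, hz2u⟩ := hz2
  have h1 : (z1 - y1) ^ 2 < s ^ 2 := sq_lt_sq' (by linarith) (by linarith)
  have h2 : (z2 - y2) ^ 2 < s ^ 2 := sq_lt_sq' (by linarith) (by linarith)
  rw [Real.sqrt_lt' hr, norm_sub_sq_real]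
  linarith [mul_le_mul_of_nonneg_left hZY hs.le, mul_le_mul_of_nonneg_left hsM hs.le]

lemma rpow_neg_half_sq {x : ℝ} (hx : 0 ≤ x) : (x ^ (-(1 / 2 : ℝ))) ^ 2 = x⁻¹ := by
  rw [← Real.rpow_natCast, ← Real.rpow_mul hx]
  norm_num [Real.rpow_neg_one]

/-- There exists d₀ ≥ 3 such that for all d ≥ d₀, writing points of ℝ^d = ℝ² × ℝ^{d−2}
as x = (x′, x″) (so that ‖z − y‖ = √((z₁−y₁)² + (z₂−y₂)² + ‖z″−y″‖²)):
(i) for every i ∈ {2,…,k+1}, if y′, z′ ∈ (0, d^{−1/2})²,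
d_{i−1} − 3/d < ‖y″‖ ≤ d_{i−1} − 2/d, d_i − 3/d < ‖z″‖ ≤ d_i − 2/d and
⟨z″, y″⟩ ≥ ‖z″‖·‖y″‖·((d_{i−1} + a_i r_i)/d_i + d^{−1/2}), then ‖z − y‖ < r_i;
(ii) if y = (y′, 0) with y′ ∈ (−d^{−1/2}, d^{−1/2}) × (−d^{−1/2}, 0) and z = (z′, z″)
with z′ ∈ (0, d^{−1/2})² and ‖z″‖ ≤ (1+ρ) − 2/d, then ‖z − y‖ < 1+ρ. -/
theorem eventually_dist_lt (ρ : ℝ) (hρ : 1 < ρ) (k : ℕ)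
    (a : Fin k → ℝ) (ha : ∀ i, 0 < a i ∧ a i < 1) :
    ∃ d₀ : ℕ, 3 ≤ d₀ ∧ ∀ d : ℕ, d₀ ≤ d →
      (∀ i : ℕ, ∀ _hi2 : 2 ≤ i, ∀ _hik : i ≤ k + 1,
        ∀ y1 y2 z1 z2 : ℝ, ∀ y'' z'' : EuclideanSpace ℝ (Fin (d - 2)),
        y1 ∈ Set.Ioo (0 : ℝ) ((d : ℝ) ^ (-(1 / 2 : ℝ))) →
        y2 ∈ Set.Ioo (0 : ℝ) ((d : ℝ) ^ (-(1 / 2 : ℝ))) →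
        z1 ∈ Set.Ioo (0 : ℝ) ((d : ℝ) ^ (-(1 / 2 : ℝ))) →
        z2 ∈ Set.Ioo (0 : ℝ) ((d : ℝ) ^ (-(1 / 2 : ℝ))) →
        dSeq ρ k a (i - 2) - 3 / (d : ℝ) < ‖y''‖ →
        ‖y''‖ ≤ dSeq ρ k a (i - 2) - 2 / (d : ℝ) →
        dSeq ρ k a (i - 1) - 3 / (d : ℝ) < ‖z''‖ →
        ‖z''‖ ≤ dSeq ρ k a (i - 1) - 2 / (d : ℝ) →
        ‖z''‖ * ‖y''‖ * ((dSeq ρ k a (i - 2) + a ⟨i - 2, by omega⟩ * rIdx ρ k i) /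
            dSeq ρ k a (i - 1) + (d : ℝ) ^ (-(1 / 2 : ℝ))) ≤ (inner ℝ z'' y'' : ℝ) →
        Real.sqrt ((z1 - y1) ^ 2 + (z2 - y2) ^ 2 + ‖z'' - y''‖ ^ 2) < rIdx ρ k i) ∧
      (∀ y1 y2 z1 z2 : ℝ, ∀ z'' : EuclideanSpace ℝ (Fin (d - 2)),
        y1 ∈ Set.Ioo (-((d : ℝ) ^ (-(1 / 2 : ℝ)))) ((d : ℝ) ^ (-(1 / 2 : ℝ))) →
        y2 ∈ Set.Ioo (-((d : ℝ) ^ (-(1 / 2 : ℝ)))) (0 : ℝ) →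
        z1 ∈ Set.Ioo (0 : ℝ) ((d : ℝ) ^ (-(1 / 2 : ℝ))) →
        z2 ∈ Set.Ioo (0 : ℝ) ((d : ℝ) ^ (-(1 / 2 : ℝ))) →
        ‖z''‖ ≤ (1 + ρ) - 2 / (d : ℝ) →
        Real.sqrt ((z1 - y1) ^ 2 + (z2 - y2) ^ 2 + ‖z''‖ ^ 2) < 1 + ρ) := by
  have hs : Tendsto (fun d : ℕ => (d : ℝ) ^ (-(1 / 2 : ℝ))) atTop (𝓝 0) :=
    (tendsto_rpow_neg_atTop (by norm_num)).comp tendsto_natCast_atTop_atTop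
  have hsM := (hs.const_mul (6 * dSeq ρ k a k + 1)).eventually_lt_const
    (by simp : (6 * dSeq ρ k a k + 1) * 0 < 1)
  have hsρ := (hs.pow 2).eventually_lt_const (by simpa using hρ : (0 : ℝ) ^ 2 < ρ - 1)
  obtain ⟨N, hN⟩ := eventually_atTop.1 (hsM.and hsρ)
  refine ⟨max N 3, le_max_right _ _, fun d hd => ?_⟩
  obtain ⟨hdM, hdρ⟩ := hN d (le_of_max_le_left hd)
  have hd0 : (0 : ℝ) < d := by exact_mod_cast (by omega : 0 < d)
  set s := (d : ℝ) ^ (-(1 / 2 : ℝ))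
  have hs0 : 0 < s := Real.rpow_pos_of_pos hd0 _
  have hs2 : (d : ℝ)⁻¹ = s ^ 2 := (rpow_neg_half_sq hd0.le).symm
  have h2 : 2 / (d : ℝ) = 2 * s ^ 2 := by rw [div_eq_mul_inv, hs2]
  have h3 : 3 / (d : ℝ) = 3 * s ^ 2 := by rw [div_eq_mul_inv, hs2]
  simp only [h2, h3]
  refine ⟨fun i hi2 hik => ?_, fun y1 y2 z1 z2 z hy1 hy2 hz1 hz2 hz =>
    planar_dist_lt_one_add hs0 hdρ hy1 hy2 hz1 hz2 (norm_nonneg z) hz⟩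
  obtain ⟨j, rfl⟩ : ∃ j, i = j + 2 := ⟨i - 2, by omega⟩
  exact fun y1 y2 z1 z2 y z => planar_dist_lt_rIdx (j := j) hρ
    (fun i => ⟨(ha i).1.le, (ha i).2.le⟩) (by omega) hs0 hdM.le
end
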